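/- (Theorem 1) Let M = (I, O, Q, q_init, δ, λ) be an IGMM in which every state is reachable from q_init by a finite sequence of δ-transitions, and let S = {C_0, …, C_{n-1}} be a set of subsets of Q of minimal cardinality among sets that are closed, cover M, and all of whose members have nonempty output. Define the IGMM M' = (I, O, S, q'_init, δ', λ') where q'_init is any C ∈ S with q_init ∈ C; for each C_j ∈ S and i ∈ 𝔹^I, if Succ(C_j,i) ≠ ∅ then δ'(C_j,i) is any C_k ∈ S with Succ(C_j,i) ⊆ C_k and λ'(C_j,i) = Out(C_j,i), while if Succ(C_j,i) = ∅ then δ'(C_j,i) is undefined and λ'(C_j,i) = 𝔹^O. Then M' is a specialization of M of minimal size: M' is a specialization of M, and every IGMM over I and O that is a specialization of M has at least n states. -/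

import Mathlib

/-! A run of `M'` through classes `C₀ C₁ …` is shadowed by the run of `M` from any `q ∈ C₀`: each
chosen successor class contains `Succ (Cⱼ, i)`, so that run stays inside the classes, and
`Out (Cⱼ, i) ⊆ λ (qⱼ, i)`. Membership `q ∈ C` is thus a simulation, and `M'` specializes `M`.

Conversely, a specialization `M''` of `M` yields a closed cover with nonempty output with at most
`|Q''|` members: to each state `r` of `M''` associate the states `q` with `r ⊑ q`, together with
the universal states. Specialization passes to successors, and when `M''` stops while `M` moves
on, the successor of `M` is universal; reachability makes these classes a cover, and
`λ'' (r, i) ⊆ λ (q, i)` whenever `r ⊑ q` gives nonempty output. Minimality of `S` concludes. -/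

/-- An incompletely specified generalized Mealy machine (IGMM) over input
propositions `I`, output propositions `O`, with state set `Q`.
Input valuations are `I → Bool`, output valuations are `O → Bool`.
`delta` is the partial transition function, `lam` the output function. -/
structure IGMM (I O Q : Type*) where
  init : Q
  delta : Q → (I → Bool) → Option Q
  lam : Q → (I → Bool) → Set (O → Bool)
  lam_nonempty : ∀ q i, (lam q i).Nonempty
  lam_top : ∀ q i, delta q i = none → lam q i = Set.univ

namespace IGMM

/-- `(ι, o) ⊨ M_q` : either an infinite run, or a finite run ending where `delta`
is undefined. -/
def Sat {I O Q : Type*} (M : IGMM I O Q) (q : Q) (ι : ℕ → I → Bool)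
    (o : ℕ → O → Bool) : Prop :=
  (∃ qs : ℕ → Q, qs 0 = q ∧
      ∀ j : ℕ, M.delta (qs j) (ι j) = some (qs (j + 1)) ∧ o j ∈ M.lam (qs j) (ι j)) ∨
  (∃ (k : ℕ) (qs : ℕ → Q), qs 0 = q ∧
      (∀ j < k, M.delta (qs j) (ι j) = some (qs (j + 1)) ∧ o j ∈ M.lam (qs j) (ι j)) ∧
      M.delta (qs k) (ι k) = none)

/-- The behaviour set `Beh_M(q, ι) = {o | (ι, o) ⊨ M_q}`. -/
def Beh {I O Q : Type*} (M : IGMM I O Q) (q : Q) (ι : ℕ → I → Bool) :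
    Set (ℕ → O → Bool) :=
  {o | M.Sat q ι o}

end IGMM

/-- `q' ⊑ q` : the state `q'` of `M'` is a specialization of the state `q` of `M`. -/
def IGMM.Specializes {I O Q' Q : Type*} (M' : IGMM I O Q') (q' : Q')
    (M : IGMM I O Q) (q : Q) : Prop :=
  ∀ ι : ℕ → I → Bool, M'.Beh q' ι ⊆ M.Beh q ι

/-- `q' ≈ q` : the state `q'` of `M'` is a variation of the state `q` of `M`. -/
def IGMM.IsVariation {I O Q' Q : Type*} (M' : IGMM I O Q') (q' : Q')
    (M : IGMM I O Q) (q : Q) : Prop :=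
  ∀ ι : ℕ → I → Bool, (M'.Beh q' ι ∩ M.Beh q ι).Nonempty

namespace IGMM

/-- `Succ(C, i)`: successors of the states of `C` under input `i`. -/
def Succ {I O Q : Type*} (M : IGMM I O Q) (C : Set Q) (i : I → Bool) : Set Q :=
  {p | ∃ q ∈ C, M.delta q i = some p}

/-- `Out(C, i) = ⋂_{q ∈ C} λ(q, i)`. -/
def Out {I O Q : Type*} (M : IGMM I O Q) (C : Set Q) (i : I → Bool) :
    Set (O → Bool) :=
  ⋂ q ∈ C, M.lam q i

/-- `S` covers `M`: every state belongs to some member of `S`. -/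
def Covers {I O Q : Type*} (M : IGMM I O Q) (S : Set (Set Q)) : Prop :=
  ∀ q : Q, ∃ C ∈ S, q ∈ C

/-- `S` is closed: the successors of each member under each input are contained
in some member. -/
def SuccClosed {I O Q : Type*} (M : IGMM I O Q) (S : Set (Set Q)) : Prop :=
  ∀ C ∈ S, ∀ i : I → Bool, ∃ C' ∈ S, M.Succ C i ⊆ C'

/-- `C` has nonempty output: `Out(C, i) ≠ ∅` for every input `i`. -/
def NonemptyOutput {I O Q : Type*} (M : IGMM I O Q) (C : Set Q) : Prop :=
  ∀ i : I → Bool, (M.Out C i).Nonempty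

end IGMM

/-- `q'` is reachable from `q` by a finite sequence of `δ`-transitions. -/
def IGMM.Reaches {I O Q : Type*} (M : IGMM I O Q) : Q → Q → Prop :=
  Relation.ReflTransGen fun a b => ∃ i : I → Bool, M.delta a i = some b

namespace IGMM

variable {I O Q Q' : Type*}

def run (M : IGMM I O Q) (q : Q) (ι : ℕ → I → Bool) : ℕ → Q
  | 0 => q
  | j + 1 => (M.delta (M.run q ι j) (ι j)).getD (M.run q ι j)

noncomputable def someOutput (M : IGMM I O Q) : Q → (ℕ → I → Bool) → ℕ → O → Bool
  | q, ι, 0 => (M.lam_nonempty q (ι 0)).some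
  | q, ι, n + 1 =>
    match M.delta q (ι 0) with
    | some p => M.someOutput p (fun n => ι (n + 1)) n
    | none => fun _ => false

variable {M : IGMM I O Q} {M' : IGMM I O Q'} {q p : Q} {r r' : Q'} {i : I → Bool}
  {ι : ℕ → I → Bool} {o : ℕ → O → Bool}

theorem run_succ_of_delta_eq_some {j : ℕ} (h : M.delta (M.run q ι j) (ι j) = some p) :
    M.run q ι (j + 1) = p := by
  simp [run, h]

theorem Sat.unfold (h : M.Sat q ι o) :
    M.delta q (ι 0) = none ∨ ∃ p, M.delta q (ι 0) = some p ∧ o 0 ∈ M.lam q (ι 0) ∧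
      M.Sat p (fun n => ι (n + 1)) (fun n => o (n + 1)) := by
  rcases h with ⟨qs, rfl, hrun⟩ | ⟨k, qs, rfl, hrun, hend⟩
  · exact .inr ⟨qs 1, (hrun 0).1, (hrun 0).2,
      .inl ⟨fun n => qs (n + 1), rfl, fun j => hrun (j + 1)⟩⟩
  · cases k with
    | zero => exact .inl hend
    | succ k =>
      obtain ⟨hstep, hout⟩ := hrun 0 k.succ_pos
      exact .inr ⟨qs 1, hstep, hout, .inr ⟨k, fun n => qs (n + 1), rfl,
        fun j hj => hrun (j + 1) (by omega), hend⟩⟩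

theorem Sat.coinduct (P : Q → (ℕ → I → Bool) → (ℕ → O → Bool) → Prop)
    (hP : ∀ q ι o, P q ι o → M.delta q (ι 0) = none ∨ ∃ p, M.delta q (ι 0) = some p ∧
      o 0 ∈ M.lam q (ι 0) ∧ P p (fun n => ι (n + 1)) (fun n => o (n + 1)))
    (h : P q ι o) : M.Sat q ι o := by
  classical
  -- `M` is deterministic, so `M.run q ι` is the only candidate run; `P` propagates along it.
  set qs := M.run q ι
  have inv : ∀ j, (∀ j' < j, M.delta (qs j') (ι j') ≠ none) →
      P (qs j) (fun n => ι (j + n)) (fun n => o (j + n)) := by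
    intro j
    induction j with
    | zero => intro _; simpa [qs, run] using h
    | succ j ih =>
      intro hdef
      rcases hP _ _ _ (ih fun j' hj' => hdef j' (by omega)) with hnone | ⟨p, hp, -, hPp⟩
      · exact absurd hnone (hdef j (by omega))
      · have hqs : qs (j + 1) = p := run_succ_of_delta_eq_some hp
        rw [hqs]
        convert hPp using 2 <;> funext n <;> congr 1 <;> omega
  have step : ∀ j, (∀ j' ≤ j, M.delta (qs j') (ι j') ≠ none) →
      M.delta (qs j) (ι j) = some (qs (j + 1)) ∧ o j ∈ M.lam (qs j) (ι j) := by
    intro j hdef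
    rcases hP _ _ _ (inv j fun j' hj' => hdef j' hj'.le) with hnone | ⟨p, hp, hout, -⟩
    · exact absurd hnone (hdef j le_rfl)
    · have hqs : qs (j + 1) = p := run_succ_of_delta_eq_some hp
      exact ⟨hqs ▸ hp, hout⟩
  by_cases hall : ∀ j, M.delta (qs j) (ι j) ≠ none
  · exact .inl ⟨qs, rfl, fun j => step j fun j' _ => hall j'⟩
  · push Not at hall
    exact .inr ⟨Nat.find hall, qs, rfl,
      fun j hj => step j fun j' hj' => Nat.find_min hall (by omega), Nat.find_spec hall⟩

theorem sat_iff : M.Sat q ι o ↔ M.delta q (ι 0) = none ∨ ∃ p, M.delta q (ι 0) = some p ∧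
    o 0 ∈ M.lam q (ι 0) ∧ M.Sat p (fun n => ι (n + 1)) (fun n => o (n + 1)) := by
  refine ⟨Sat.unfold, Sat.coinduct (fun q ι o => M.delta q (ι 0) = none ∨ ∃ p,
      M.delta q (ι 0) = some p ∧ o 0 ∈ M.lam q (ι 0) ∧
        M.Sat p (fun n => ι (n + 1)) (fun n => o (n + 1)))
    fun q ι o h => h.imp_right fun ⟨p, hp, ho, hs⟩ => ⟨p, hp, ho, hs.unfold⟩⟩

theorem sat_of_delta_eq_none (h : M.delta q (ι 0) = none) : M.Sat q ι o :=
  sat_iff.2 (.inl h)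

theorem sat_iff_of_delta_eq_some (h : M.delta q (ι 0) = some p) :
    M.Sat q ι o ↔ o 0 ∈ M.lam q (ι 0) ∧ M.Sat p (fun n => ι (n + 1)) (fun n => o (n + 1)) := by
  rw [sat_iff]
  simp [h]

theorem sat_someOutput (M : IGMM I O Q) (q : Q) (ι : ℕ → I → Bool) :
    M.Sat q ι (M.someOutput q ι) := by
  refine Sat.coinduct (fun q ι o => o = M.someOutput q ι) ?_ rfl
  rintro q ι _ rfl
  cases hp : M.delta q (ι 0) with
  | none => exact .inl rfl
  | some p =>
    refine .inr ⟨p, rfl, (M.lam_nonempty q (ι 0)).some_mem, ?_⟩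
    funext n
    simp [someOutput, hp]

theorem exists_sat_cons_of_mem_lam {o₀ : O → Bool} (h : o₀ ∈ M.lam q i) (ι : ℕ → I → Bool) :
    ∃ o : ℕ → O → Bool, M.Sat q (Stream'.cons i ι) (Stream'.cons o₀ o) := by
  cases hp : M.delta q i with
  | none => exact ⟨fun _ _ => false, sat_of_delta_eq_none hp⟩
  | some p => exact ⟨M.someOutput p ι, (sat_iff_of_delta_eq_some hp).2 ⟨h, M.sat_someOutput p ι⟩⟩

theorem specializes_of_simulation (R : Q' → Q → Prop)
    (hR : ∀ r q i p, R r q → M.delta q i = some p →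
      ∃ r', M'.delta r i = some r' ∧ R r' p ∧ M'.lam r i ⊆ M.lam q i)
    (h : R r q) : M'.Specializes r M q := by
  intro ι o ho
  refine Sat.coinduct (fun q ι o => ∃ r, R r q ∧ M'.Sat r ι o)
    (fun q ι o ⟨r, hrq, hr⟩ => ?_) ⟨r, h, ho⟩
  cases hp : M.delta q (ι 0) with
  | none => exact .inl rfl
  | some p =>
    obtain ⟨r', hr', hrp, hlam⟩ := hR r q (ι 0) p hrq hp
    obtain ⟨ho₀, hsat⟩ := (sat_iff_of_delta_eq_some hr').1 hr
    exact .inr ⟨p, rfl, hlam ho₀, r', hrp, hsat⟩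

def IsUniversal (M : IGMM I O Q) (q : Q) : Prop :=
  ∀ ι o, M.Sat q ι o

theorem IsUniversal.succ (hq : M.IsUniversal q) (hp : M.delta q i = some p) :
    M.IsUniversal p := fun ι o =>
  ((sat_iff_of_delta_eq_some hp).1 (hq (Stream'.cons i ι) (Stream'.cons (fun _ => false) o))).2

theorem IsUniversal.lam_eq_univ (hq : M.IsUniversal q) : M.lam q i = Set.univ := by
  refine Set.eq_univ_of_forall fun o₀ => ?_
  cases hp : M.delta q i with
  | none => simp [M.lam_top q i hp]
  | some p =>
    exact ((sat_iff_of_delta_eq_some hp).1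
      (hq (Stream'.cons i fun _ _ => false) (Stream'.cons o₀ fun _ _ => false))).1

theorem Specializes.succ (hs : M'.Specializes r M q) (hr : M'.delta r i = some r')
    (hp : M.delta q i = some p) : M'.Specializes r' M p := by
  intro ι o ho
  obtain ⟨o₀, ho₀⟩ := M'.lam_nonempty r i
  have hcons : M'.Sat r (Stream'.cons i ι) (Stream'.cons o₀ o) :=
    (sat_iff_of_delta_eq_some hr).2 ⟨ho₀, ho⟩
  exact ((sat_iff_of_delta_eq_some hp).1 (hs _ hcons)).2

theorem Specializes.isUniversal_succ (hs : M'.Specializes r M q) (hr : M'.delta r i = none)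
    (hp : M.delta q i = some p) : M.IsUniversal p := fun ι o =>
  ((sat_iff_of_delta_eq_some hp).1 (hs (Stream'.cons i ι)
    (sat_of_delta_eq_none hr : M'.Sat r _ (Stream'.cons (fun _ => false) o)))).2

theorem Specializes.lam_subset (hs : M'.Specializes r M q) : M'.lam r i ⊆ M.lam q i := by
  intro o₀ ho₀
  obtain ⟨o, ho⟩ := exists_sat_cons_of_mem_lam ho₀ fun _ _ => false
  cases hp : M.delta q i with
  | none => simp [M.lam_top q i hp]
  | some p => exact ((sat_iff_of_delta_eq_some hp).1 (hs _ ho)).1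

/-- Universal states belong to every class: `M` enters them when `M'` stops but `M` does not. -/
def specializedBy (M : IGMM I O Q) (M' : IGMM I O Q') (r : Q') : Set Q :=
  {q | M'.Specializes r M q ∨ M.IsUniversal q}

theorem succ_mem_specializedBy (hq : q ∈ M.specializedBy M' r) (hp : M.delta q i = some p)
    (r₀ : Q') : p ∈ M.specializedBy M' ((M'.delta r i).getD r₀) := by
  rcases hq with hs | hu
  · cases hr : M'.delta r i with
    | none => exact .inr (hs.isUniversal_succ hr hp)
    | some r' => exact .inl (hs.succ hr hp)
  · exact .inr (hu.succ hp)

theorem covers_range_specializedBy {q₀ : Q} {r₀ : Q'} (hreach : ∀ q, M.Reaches q₀ q)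
    (hs : M'.Specializes r₀ M q₀) : M.Covers (Set.range (M.specializedBy M')) := by
  intro q
  suffices ∃ r, q ∈ M.specializedBy M' r from
    let ⟨r, hr⟩ := this; ⟨_, ⟨r, rfl⟩, hr⟩
  induction hreach q with
  | refl => exact ⟨r₀, .inl hs⟩
  | tail _ hstep ih =>
    obtain ⟨i, hp⟩ := hstep
    obtain ⟨r, hr⟩ := ih
    exact ⟨_, succ_mem_specializedBy hr hp r⟩

theorem succClosed_range_specializedBy : M.SuccClosed (Set.range (M.specializedBy M')) := by
  rintro _ ⟨r, rfl⟩ i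
  exact ⟨_, ⟨(M'.delta r i).getD r, rfl⟩, fun p ⟨_, hq, hp⟩ => succ_mem_specializedBy hq hp r⟩

theorem nonemptyOutput_specializedBy : M.NonemptyOutput (M.specializedBy M' r) := by
  intro i
  obtain ⟨o₀, ho₀⟩ := M'.lam_nonempty r i
  refine ⟨o₀, Set.mem_iInter₂.2 fun q hq => ?_⟩
  rcases hq with hs | hu
  · exact hs.lam_subset ho₀
  · simp [hu.lam_eq_univ]

end IGMM

theorem minimal_class_machine_general {I O Q : Type*}
    (M : IGMM I O Q)
    (hreach : ∀ q : Q, M.Reaches M.init q)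
    (S : Set (Set Q))
    (hmin : ∀ T : Set (Set Q), M.Covers T → M.SuccClosed T →
        (∀ C ∈ T, M.NonemptyOutput C) → S.ncard ≤ T.ncard)
    (M' : IGMM I O {C : Set Q // C ∈ S})
    (hinit : M.init ∈ M'.init.1)
    (hdelta_pos : ∀ (C : {C : Set Q // C ∈ S}) (i : I → Bool),
        (M.Succ C.1 i).Nonempty →
        ∃ Ck : {C : Set Q // C ∈ S}, M'.delta C i = some Ck ∧ M.Succ C.1 i ⊆ Ck.1)
    (hlam_pos : ∀ (C : {C : Set Q // C ∈ S}) (i : I → Bool),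
        (M.Succ C.1 i).Nonempty → M'.lam C i = M.Out C.1 i) :
    IGMM.Specializes M' M'.init M M.init ∧
    ∀ (Q'' : Type*) [Fintype Q''] (M'' : IGMM I O Q''),
        IGMM.Specializes M'' M''.init M M.init → S.ncard ≤ Fintype.card Q'' := by
  refine ⟨IGMM.specializes_of_simulation (fun C q => q ∈ C.1) ?_ hinit, ?_⟩
  · intro C q i p hq hp
    have hsucc : p ∈ M.Succ C.1 i := ⟨q, hq, hp⟩
    obtain ⟨Ck, hCk, hsub⟩ := hdelta_pos C i ⟨p, hsucc⟩
    exact ⟨Ck, hCk, hsub hsucc, (hlam_pos C i ⟨p, hsucc⟩).le.trans (Set.biInter_subset_of_mem hq)⟩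
  · intro Q'' _ M'' hspec
    calc S.ncard ≤ (Set.range (M.specializedBy M'')).ncard :=
          hmin _ (IGMM.covers_range_specializedBy hreach hspec) IGMM.succClosed_range_specializedBy
            (by rintro _ ⟨r, rfl⟩; exact IGMM.nonemptyOutput_specializedBy)
      _ ≤ Fintype.card Q'' := (Finite.card_range_le _).trans_eq Nat.card_eq_fintype_card

/-- Theorem 1: if every state of `M` is reachable from `q_init`
and `S` is of minimal cardinality among closed covers of `M` all of whose
members have nonempty output, then any machine `M'` built on the classes of `S`
as described is a specialization of `M` of minimal size: it is a specialization
of `M`, and every IGMM over `I` and `O` that is a specialization of `M` has at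
least `|S|` states. -/
theorem minimal_class_machine {I O Q : Type*}
    [Fintype I] [Fintype O] [Fintype Q]
    (M : IGMM I O Q)
    (hreach : ∀ q : Q, M.Reaches M.init q)
    (S : Set (Set Q))
    (hcov : M.Covers S) (hclosed : M.SuccClosed S)
    (hne : ∀ C ∈ S, M.NonemptyOutput C)
    (hmin : ∀ T : Set (Set Q), M.Covers T → M.SuccClosed T →
        (∀ C ∈ T, M.NonemptyOutput C) → S.ncard ≤ T.ncard)
    (M' : IGMM I O {C : Set Q // C ∈ S})
    (hinit : M.init ∈ M'.init.1)
    (hdelta_pos : ∀ (C : {C : Set Q // C ∈ S}) (i : I → Bool),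
        (M.Succ C.1 i).Nonempty →
        ∃ Ck : {C : Set Q // C ∈ S}, M'.delta C i = some Ck ∧ M.Succ C.1 i ⊆ Ck.1)
    (hdelta_neg : ∀ (C : {C : Set Q // C ∈ S}) (i : I → Bool),
        M.Succ C.1 i = ∅ → M'.delta C i = none)
    (hlam_pos : ∀ (C : {C : Set Q // C ∈ S}) (i : I → Bool),
        (M.Succ C.1 i).Nonempty → M'.lam C i = M.Out C.1 i)
    (hlam_neg : ∀ (C : {C : Set Q // C ∈ S}) (i : I → Bool),
        M.Succ C.1 i = ∅ → M'.lam C i = Set.univ) :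
    IGMM.Specializes M' M'.init M M.init ∧
    ∀ (Q'' : Type*) [Fintype Q''] (M'' : IGMM I O Q''),
        IGMM.Specializes M'' M''.init M M.init → S.ncard ≤ Fintype.card Q'' :=
  minimal_class_machine_general M hreach S hmin M' hinit hdelta_pos hlam_pos
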